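/- Let k be a field of characteristic zero and B a two-dimensional affine k-domain with ML*(B) ≠ B. Then ML(B) = ML*(B). -/

import Mathlib

/-- A derivation is *locally nilpotent* if every element is killed by some iterate. -/
def IsLND {k B : Type*} [CommRing k] [CommRing B] [Algebra k B]
    (D : Derivation k B B) : Prop :=
  ∀ b : B, ∃ n : ℕ, (D.toLinearMap ^ n) b = 0

/-- A derivation *has a slice* if `1` is in its image. -/
def HasSlice {k B : Type*} [CommRing k] [CommRing B] [Algebra k B]
    (D : Derivation k B B) : Prop :=
  ∃ s : B, D s = 1

/-- The kernel of a derivation, as a subalgebra. -/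
def lndKer {k B : Type*} [CommRing k] [CommRing B] [Algebra k B]
    (D : Derivation k B B) : Subalgebra k B where
  carrier := {b | D b = 0}
  mul_mem' := by
    intro a b ha hb
    simp only [Set.mem_setOf_eq] at *
    simp [D.leibniz, ha, hb]
  add_mem' := by
    intro a b ha hb
    simp only [Set.mem_setOf_eq] at *
    simp [ha, hb]
  algebraMap_mem' := fun r => D.map_algebraMap r

/-- The Makar-Limanov invariant: intersection of the kernels of all locally
nilpotent derivations. -/
def ML (k : Type*) {B : Type*} [CommRing k] [CommRing B] [Algebra k B] : Subalgebra k B :=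
  ⨅ D ∈ {D : Derivation k B B | IsLND D}, lndKer D

/-- The Makar-Limanov–Freudenburg invariant: intersection of the kernels of all locally
nilpotent derivations admitting a slice (equal to `⊤ = B` if none exist). -/
def MLstar (k : Type*) {B : Type*} [CommRing k] [CommRing B] [Algebra k B] : Subalgebra k B :=
  ⨅ D ∈ {D : Derivation k B B | IsLND D ∧ HasSlice D}, lndKer D

/-- A `k`-algebra is *rigid* if it admits no nonzero locally nilpotent derivation. -/
def IsRigid (k B : Type*) [CommRing k] [CommRing B] [Algebra k B] : Prop :=
  ∀ D : Derivation k B B, IsLND D → D = 0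

/-- The extension `A ⊆ B` has transcendence degree `n`. -/
def TrdegEq (A B : Type*) [CommRing A] [CommRing B] [Algebra A B] (n : ℕ) : Prop :=
  (∃ x : Fin n → B, AlgebraicIndependent A x) ∧
    ∀ x : Fin (n + 1) → B, ¬ AlgebraicIndependent A x

/-- A subring `A` of a domain `B` is *inert* if `f * g ∈ A` for nonzero `f, g`
implies `f ∈ A` and `g ∈ A`. -/
def IsInert {B : Type*} [CommRing B] (A : Subring B) : Prop :=
  ∀ f g : B, f ≠ 0 → g ≠ 0 → f * g ∈ A → f ∈ A ∧ g ∈ A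

/-!
Let `b ∈ ML*(B)`, let `D` be locally nilpotent with `D b ≠ 0`, and fix a locally nilpotent `T`
with slice `s`. For `f ∈ ker D` and `c ∈ k`, `exp (c f D)` is an automorphism of `B`, and
conjugating `T` by it gives another locally nilpotent derivation with a slice; so
`T (exp (c f D) b) = 0` for all `c`, and the coefficient of `c` in this polynomial identity is
`T (f * D b) = 0`. Since `ker T` is factorially closed, `ker D ⊆ ker T`. Now take a local slice
`r` of `D` (`D r ≠ 0 = D (D r)`): the derivation `D r • T - T r • D` kills `ker D` and `r`,
hence vanishes. Evaluating it at `b` gives `T r = 0`, and then at `s` gives `D r = 0`, a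
contradiction.
-/

open Finset
open scoped Nat

theorem Finset.sum_range_sum_range_eq_sum_antidiagonal {M : Type*} [AddCommMonoid M] {N : ℕ}
    (f : ℕ → ℕ → M) (hf : ∀ i j, N ≤ i + j → f i j = 0) :
    ∑ i ∈ range N, ∑ j ∈ range N, f i j =
      ∑ n ∈ range N, ∑ ij ∈ antidiagonal n, f ij.1 ij.2 := by
  simp only [Nat.sum_antidiagonal_eq_sum_range_succ f, sum_range_diag_flip]
  refine sum_congr rfl fun i hi => (sum_subset (range_mono (Nat.sub_le N i)) fun j _ hj => ?_).symm
  exact hf i j (by simp only [mem_range] at hi hj; omega)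

theorem Nat.cast_add_choose_mul_inv_factorial (K : Type*) [Field K] [CharZero K] (i j : ℕ) :
    ((i + j).choose i : K) * ((i + j)! : K)⁻¹ = (i ! : K)⁻¹ * (j ! : K)⁻¹ := by
  have : ((i + j)! : K) ≠ 0 := Nat.cast_ne_zero.2 (Nat.factorial_ne_zero _)
  rw [Nat.cast_add_choose]
  field_simp

theorem Polynomial.eq_zero_of_forall_eval_algebraMap_eq_zero {k B : Type*} [Field k] [Infinite k]
    [CommRing B] [IsDomain B] [Algebra k B] {p : Polynomial B}
    (h : ∀ c : k, p.eval (algebraMap k B c) = 0) : p = 0 :=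
  p.eq_zero_of_infinite_isRoot <| (Set.infinite_range_of_injective
    (algebraMap k B).injective).mono <| Set.range_subset_iff.2 h

namespace Derivation

section CommSemiring

variable {R A : Type*} [CommSemiring R] [CommSemiring A] [Algebra R A] (D : Derivation R A A)

theorem pow_succ_apply' (n : ℕ) (x : A) :
    (D.toLinearMap ^ (n + 1)) x = (D.toLinearMap ^ n) (D x) := by
  rw [pow_succ, Module.End.mul_apply]; rfl

theorem pow_succ_apply (n : ℕ) (x : A) :
    (D.toLinearMap ^ (n + 1)) x = D ((D.toLinearMap ^ n) x) := by
  rw [pow_succ', Module.End.mul_apply]; rfl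

theorem pow_apply_mul (n : ℕ) (x y : A) :
    (D.toLinearMap ^ n) (x * y) =
      ∑ ij ∈ antidiagonal n,
        n.choose ij.1 • ((D.toLinearMap ^ ij.1) x * (D.toLinearMap ^ ij.2) y) := by
  induction n with
  | zero => simp
  | succ n ih =>
    rw [sum_antidiagonal_choose_succ_nsmul
      (fun i j => (D.toLinearMap ^ i) x * (D.toLinearMap ^ j) y) n]
    simp only [pow_succ_apply, ih, map_sum, map_nsmul, leibniz, smul_eq_mul, smul_add,
      sum_add_distrib]
    congr 1
    refine sum_congr rfl fun ij hij => ?_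
    rw [n.choose_symm_of_eq_add (mem_antidiagonal.1 hij).symm, mul_comm]

theorem pow_apply_eq_zero_of_le {x : A} {m n : ℕ} (hx : (D.toLinearMap ^ m) x = 0)
    (h : m ≤ n) : (D.toLinearMap ^ n) x = 0 := by
  rw [← Nat.sub_add_cancel h, pow_add, Module.End.mul_apply, hx, map_zero]

variable {D}

theorem pow_apply_mul_pow_apply_eq_zero {x y : A} {m n i j : ℕ}
    (hx : (D.toLinearMap ^ m) x = 0) (hy : (D.toLinearMap ^ n) y = 0) (h : m + n ≤ i + j) :
    (D.toLinearMap ^ i) x * (D.toLinearMap ^ j) y = 0 := by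
  rcases le_or_gt m i with hi | hi
  · rw [D.pow_apply_eq_zero_of_le hx hi, zero_mul]
  · rw [D.pow_apply_eq_zero_of_le hy (by omega), mul_zero]

theorem pow_apply_mul_of_apply_eq_zero {a : A} (ha : D a = 0) (n : ℕ) (x : A) :
    (D.toLinearMap ^ n) (a * x) = a * (D.toLinearMap ^ n) x := by
  induction n with
  | zero => rfl
  | succ n ih => rw [pow_succ_apply, ih, pow_succ_apply, leibniz, ha, smul_zero, add_zero,
      smul_eq_mul]

theorem pow_smul_apply {f : A} (hf : D f = 0) (n : ℕ) (x : A) :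
    ((f • D).toLinearMap ^ n) x = f ^ n * (D.toLinearMap ^ n) x := by
  induction n with
  | zero => simp
  | succ n ih =>
    have hfn : D (f ^ n) = 0 := by rw [leibniz_pow, hf, smul_zero, smul_zero]
    rw [pow_succ_apply, ih, smul_apply, leibniz, hfn, smul_zero, add_zero, ← pow_succ_apply,
      smul_eq_mul, smul_eq_mul, pow_succ]
    ring

theorem pow_apply_pow_of_apply_apply_eq_zero {r : A} (hr : D (D r) = 0) (n : ℕ) :
    (D.toLinearMap ^ n) (r ^ n) = n ! • D r ^ n := by
  induction n with
  | zero => simp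
  | succ n ih =>
    rw [pow_succ_apply', leibniz_pow, Nat.add_sub_cancel, smul_eq_mul, mul_comm (r ^ n),
      map_nsmul, pow_apply_mul_of_apply_eq_zero hr, ih, Nat.factorial_succ]
    simp only [nsmul_eq_mul]
    push_cast
    ring

end CommSemiring

variable {k B : Type*} [Field k] [CommRing B] [Algebra k B]

def conj (σ : B ≃ₐ[k] B) (T : Derivation k B B) : Derivation k B B :=
  .mk' (σ.toLinearMap ∘ₗ T.toLinearMap ∘ₗ σ.symm.toLinearMap) fun x y => by
    simp [leibniz, smul_eq_mul]

theorem conj_apply (σ : B ≃ₐ[k] B) (T : Derivation k B B) (x : B) :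
    conj σ T x = σ (T (σ.symm x)) := rfl

theorem pow_conj_apply (σ : B ≃ₐ[k] B) (T : Derivation k B B) (n : ℕ) (x : B) :
    ((conj σ T).toLinearMap ^ n) x = σ ((T.toLinearMap ^ n) (σ.symm x)) := by
  induction n generalizing x with
  | zero => simp
  | succ n ih => rw [pow_succ_apply', ih, conj_apply, AlgEquiv.symm_apply_apply, pow_succ_apply']

/-- `exp (t • D)`. Only meaningful when `D` is locally nilpotent: otherwise the support may be
infinite and `finsum` returns `0`. -/
noncomputable def exp (D : Derivation k B B) (t : k) (x : B) : B :=
  ∑ᶠ n, (t ^ n / n !) • (D.toLinearMap ^ n) x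

variable {D : Derivation k B B}

theorem exp_eq_sum {x : B} {N : ℕ} (hN : (D.toLinearMap ^ N) x = 0) (t : k) :
    D.exp t x = ∑ n ∈ range N, (t ^ n / n !) • (D.toLinearMap ^ n) x := by
  refine finsum_eq_sum_of_support_subset _ fun n hn => ?_
  by_contra h
  simp only [coe_range, Set.mem_Iio, not_lt] at h
  exact hn (by simp [D.pow_apply_eq_zero_of_le hN h])

theorem exp_zero (x : B) : D.exp 0 x = x := by
  rw [exp, finsum_eq_single _ 0 fun n hn => by simp [zero_pow hn]]
  simp

theorem exp_algebraMap (t c : k) : D.exp t (algebraMap k B c) = algebraMap k B c :=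
  (exp_eq_sum (N := 1) (by simp) t).trans (by simp)

theorem exp_add (hD : IsLND D) (t : k) (x y : B) : D.exp t (x + y) = D.exp t x + D.exp t y := by
  obtain ⟨M, hM⟩ := hD x
  obtain ⟨N, hN⟩ := hD y
  have hx := D.pow_apply_eq_zero_of_le hM (Nat.le_add_right M N)
  have hy := D.pow_apply_eq_zero_of_le hN (Nat.le_add_left N M)
  rw [exp_eq_sum hx, exp_eq_sum hy, exp_eq_sum (by rw [map_add, hx, hy, add_zero]),
    ← sum_add_distrib]
  simp only [map_add, smul_add]

section CharZero

variable [CharZero k]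

theorem exp_mul (hD : IsLND D) (t : k) (x y : B) : D.exp t (x * y) = D.exp t x * D.exp t y := by
  obtain ⟨M, hM⟩ := hD x
  obtain ⟨N, hN⟩ := hD y
  have hx := D.pow_apply_eq_zero_of_le hM (Nat.le_add_right M N)
  have hy := D.pow_apply_eq_zero_of_le hN (Nat.le_add_left N M)
  have hxy : (D.toLinearMap ^ (M + N)) (x * y) = 0 := by
    rw [pow_apply_mul]
    refine sum_eq_zero fun ij hij => ?_
    rw [pow_apply_mul_pow_apply_eq_zero hM hN (mem_antidiagonal.1 hij).ge, smul_zero]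
  rw [exp_eq_sum hx, exp_eq_sum hy, exp_eq_sum hxy, sum_mul_sum,
    sum_range_sum_range_eq_sum_antidiagonal _ fun i j h => by
      rw [smul_mul_smul_comm, pow_apply_mul_pow_apply_eq_zero hM hN h, smul_zero]]
  refine sum_congr rfl fun n _ => ?_
  rw [pow_apply_mul, smul_sum]
  refine sum_congr rfl fun ij hij => ?_
  obtain rfl := mem_antidiagonal.1 hij
  rw [smul_mul_smul_comm, ← Nat.cast_smul_eq_nsmul k, smul_smul]
  congr 1
  rw [div_eq_mul_inv, div_eq_mul_inv, div_eq_mul_inv, pow_add]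
  linear_combination (t ^ ij.1 * t ^ ij.2) * Nat.cast_add_choose_mul_inv_factorial k ij.1 ij.2

theorem exp_exp (hD : IsLND D) (s t : k) (x : B) : D.exp s (D.exp t x) = D.exp (s + t) x := by
  obtain ⟨N, hN⟩ := hD x
  have hshift : ∀ i j, (D.toLinearMap ^ i) ((D.toLinearMap ^ j) x) =
      (D.toLinearMap ^ (i + j)) x := fun i j => by rw [← Module.End.mul_apply, ← pow_add]
  have hexp : (D.toLinearMap ^ N) (D.exp t x) = 0 := by
    rw [exp_eq_sum hN, map_sum]
    exact sum_eq_zero fun j _ => by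
      rw [_root_.map_smul, hshift, D.pow_apply_eq_zero_of_le hN (Nat.le_add_right N j), smul_zero]
  rw [exp_eq_sum hexp, exp_eq_sum hN, exp_eq_sum hN]
  simp only [map_sum, _root_.map_smul, hshift, smul_sum, smul_smul]
  rw [sum_range_sum_range_eq_sum_antidiagonal _ fun i j h => by
    rw [D.pow_apply_eq_zero_of_le hN h, smul_zero]]
  refine sum_congr rfl fun n _ => ?_
  rw [(Commute.all s t).add_pow', sum_div, sum_smul]
  refine sum_congr rfl fun ij hij => ?_
  obtain rfl := mem_antidiagonal.1 hij
  rw [nsmul_eq_mul, div_eq_mul_inv, div_eq_mul_inv, div_eq_mul_inv]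
  congr 1
  linear_combination (-(s ^ ij.1 * t ^ ij.2)) * Nat.cast_add_choose_mul_inv_factorial k ij.1 ij.2

end CharZero

end Derivation

open Derivation

section LocallyNilpotent

variable {k B : Type*} [Field k] [CommRing B] [Algebra k B] {D T : Derivation k B B}

theorem IsLND.conj (σ : B ≃ₐ[k] B) (hT : IsLND T) : IsLND (conj σ T) := fun x => by
  obtain ⟨n, hn⟩ := hT (σ.symm x)
  exact ⟨n, by rw [pow_conj_apply, hn, map_zero]⟩

theorem HasSlice.conj (σ : B ≃ₐ[k] B) (hT : HasSlice T) : HasSlice (conj σ T) := by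
  obtain ⟨s, hs⟩ := hT
  exact ⟨σ s, by rw [conj_apply, AlgEquiv.symm_apply_apply, hs, map_one]⟩

theorem IsLND.smul {f : B} (hD : IsLND D) (hf : D f = 0) : IsLND (f • D) := fun x => by
  obtain ⟨n, hn⟩ := hD x
  exact ⟨n, by rw [pow_smul_apply hf, hn, mul_zero]⟩

theorem IsLND.exists_degree (hD : IsLND D) {x : B} (hx : x ≠ 0) :
    ∃ n, (D.toLinearMap ^ n) x ≠ 0 ∧ (D.toLinearMap ^ (n + 1)) x = 0 := by
  classical
  have hpos : Nat.find (hD x) ≠ 0 := fun h => hx (by simpa [h] using Nat.find_spec (hD x))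
  refine ⟨Nat.find (hD x) - 1, Nat.find_min (hD x) (by omega), ?_⟩
  rw [Nat.sub_add_cancel (Nat.pos_of_ne_zero hpos)]
  exact Nat.find_spec (hD x)

theorem IsLND.exists_localSlice (hD : IsLND D) {x : B} (hx : D x ≠ 0) :
    ∃ r, D r ≠ 0 ∧ D (D r) = 0 := by
  obtain ⟨n, hn, hn'⟩ := hD.exists_degree hx
  have hDr : D ((D.toLinearMap ^ n) x) = (D.toLinearMap ^ n) (D x) := by
    rw [← pow_succ_apply, pow_succ_apply']
  refine ⟨_, hDr ▸ hn, ?_⟩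
  rwa [hDr, ← pow_succ_apply, pow_succ_apply']

theorem mem_MLstar_iff {b : B} :
    b ∈ MLstar k ↔ ∀ T : Derivation k B B, IsLND T → HasSlice T → T b = 0 := by
  simp only [MLstar, Algebra.mem_iInf]
  exact ⟨fun h T hT hs => h T ⟨hT, hs⟩, fun h T hT => h T hT.1 hT.2⟩

theorem mem_ML_iff {b : B} : b ∈ ML k ↔ ∀ D : Derivation k B B, IsLND D → D b = 0 := by
  simp only [ML, Algebra.mem_iInf]
  rfl

theorem ML_le_MLstar : ML k (B := B) ≤ MLstar k :=
  biInf_mono fun _ hD => hD.1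

theorem exists_isLND_hasSlice_of_MLstar_ne_top (h : MLstar k (B := B) ≠ ⊤) :
    ∃ T : Derivation k B B, IsLND T ∧ HasSlice T := by
  by_contra! hT
  exact h (eq_top_iff.2 fun b _ => mem_MLstar_iff.2 fun T hT' hs => absurd hs (hT T hT'))

theorem AlgEquiv.map_mem_MLstar (σ : B ≃ₐ[k] B) {b : B} (hb : b ∈ MLstar k) :
    σ b ∈ MLstar k :=
  mem_MLstar_iff.2 fun T hT hs => by
    simpa [conj_apply] using mem_MLstar_iff.1 hb _ (hT.conj σ.symm) (hs.conj σ.symm)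

variable [CharZero k]

noncomputable def IsLND.exp (hD : IsLND D) (t : k) : B ≃ₐ[k] B where
  toFun := D.exp t
  invFun := D.exp (-t)
  left_inv x := by rw [exp_exp hD, neg_add_cancel, exp_zero]
  right_inv x := by rw [exp_exp hD, add_neg_cancel, exp_zero]
  map_mul' := exp_mul hD t
  map_add' := exp_add hD t
  commutes' := exp_algebraMap t

theorem IsLND.exp_smul_apply {f : B} (hD : IsLND D) (hf : D f = 0) (t : k) {x : B} {N : ℕ}
    (hN : (D.toLinearMap ^ N) x = 0) :
    (hD.smul hf).exp t x =
      ∑ n ∈ range N, (t ^ n / n !) • (f ^ n * (D.toLinearMap ^ n) x) := by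
  rw [IsLND.exp, AlgEquiv.coe_mk, Equiv.coe_fn_mk,
    exp_eq_sum (by rw [pow_smul_apply hf, hN, mul_zero])]
  simp only [pow_smul_apply hf]

variable [IsDomain B]

theorem apply_mul_apply_eq_zero_of_mem_MLstar {b f : B} (hb : b ∈ MLstar k) (hD : IsLND D)
    (hT : IsLND T) (hs : HasSlice T) (hf : D f = 0) : T (f * D b) = 0 := by
  obtain ⟨N, hN⟩ := hD b
  have hN2 := D.pow_apply_eq_zero_of_le hN (Nat.le_add_right N 2)
  set p : Polynomial B := ∑ n ∈ range (N + 2),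
    Polynomial.monomial n ((n ! : k)⁻¹ • T (f ^ n * (D.toLinearMap ^ n) b))
  have hp : p = 0 := Polynomial.eq_zero_of_forall_eval_algebraMap_eq_zero fun c => by
    have := mem_MLstar_iff.1 ((hD.smul hf).exp c |>.map_mem_MLstar hb) T hT hs
    rw [hD.exp_smul_apply hf c hN2, map_sum] at this
    rw [← this, Polynomial.eval_finsetSum]
    refine sum_congr rfl fun n _ => ?_
    rw [Derivation.map_smul, Polynomial.eval_monomial, ← map_pow, mul_comm, ← Algebra.smul_def,
      smul_smul, div_eq_mul_inv]
  have h1 := congr(Polynomial.coeff $hp 1)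
  simp only [p, Polynomial.finsetSum_coeff, Polynomial.coeff_monomial, sum_ite_eq', mem_range]
    at h1
  simpa using h1

theorem IsLND.apply_eq_zero_of_apply_mul_eq_zero (hD : IsLND D) {x y : B} (hy : y ≠ 0)
    (h : D (x * y) = 0) : D x = 0 := by
  rcases eq_or_ne x 0 with rfl | hx
  · exact D.map_zero
  obtain ⟨m, hm, hm'⟩ := hD.exists_degree hx
  obtain ⟨n, hn, hn'⟩ := hD.exists_degree hy
  rcases Nat.eq_zero_or_pos m with rfl | hmpos
  · simpa using hm'
  have hmn : (D.toLinearMap ^ (m + n)) (x * y) = 0 :=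
    D.pow_apply_eq_zero_of_le (n := m + n) (m := 1) (by simpa using h) (by omega)
  rw [pow_apply_mul, sum_eq_single (m, n) (fun ij hij hne => ?_) (by simp)] at hmn
  · have : CharZero B := charZero_of_injective_algebraMap (algebraMap k B).injective
    exact mul_ne_zero (mul_ne_zero (Nat.cast_ne_zero.2 (Nat.choose_pos (Nat.le_add_right m n)).ne')
      hm) hn (by simpa only [nsmul_eq_mul, mul_assoc] using hmn) |>.elim
  · replace hij := mem_antidiagonal.1 hij
    rcases lt_or_gt_of_ne (show ij.1 ≠ m from fun h => hne (Prod.ext h (by omega))) with hi | hi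
    · rw [D.pow_apply_eq_zero_of_le hn' (by omega), mul_zero, smul_zero]
    · rw [D.pow_apply_eq_zero_of_le hm' hi, zero_mul, smul_zero]

theorem IsLND.eq_zero_of_ker_le {E : Derivation k B B} (hD : IsLND D) {r : B} (hr : D r ≠ 0)
    (hrr : D (D r) = 0) (hker : ∀ x, D x = 0 → E x = 0) (hEr : E r = 0) : E = 0 := by
  have hD' : ∀ n, D (D r ^ n) = 0 := fun n => by rw [leibniz_pow, hrr, smul_zero, smul_zero]
  have hEc : ∀ n, E (D r ^ n) = 0 := fun n => hker _ (hD' n)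
  suffices ∀ n x, (D.toLinearMap ^ n) x = 0 → E x = 0 from
    ext fun x => (hD x).elim fun n hn => this n x hn
  intro n
  induction n with
  | zero => simp
  | succ n ih =>
    intro x hx
    set z := (D.toLinearMap ^ n) x
    have hz : D z = 0 := by rwa [← pow_succ_apply]
    -- Taylor expansion in `r`: subtracting `z r ^ n / n!` lowers the nilpotency order.
    have hy : (D.toLinearMap ^ n) (D r ^ n * x - (n ! : k)⁻¹ • (z * r ^ n)) = 0 := by
      rw [map_sub, _root_.map_smul, pow_apply_mul_of_apply_eq_zero (hD' n),
        pow_apply_mul_of_apply_eq_zero hz, pow_apply_pow_of_apply_apply_eq_zero hrr,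
        ← Nat.cast_smul_eq_nsmul k, mul_smul_comm, smul_smul,
        inv_mul_cancel₀ (Nat.cast_ne_zero.2 n.factorial_ne_zero), one_smul, mul_comm, sub_self]
    have := ih _ hy
    rw [map_sub, Derivation.map_smul, leibniz, leibniz, hEc, leibniz_pow, hEr, hker z hz] at this
    simpa [hr] using this

theorem IsLND.smul_eq_smul_of_ker_le (hD : IsLND D) {r : B} (hr : D r ≠ 0) (hrr : D (D r) = 0)
    (hker : ∀ x, D x = 0 → T x = 0) : D r • T = T r • D :=
  sub_eq_zero.1 <| hD.eq_zero_of_ker_le hr hrr (fun x hx => by simp [hx, hker x hx])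
    (by simp [mul_comm])

end LocallyNilpotent

theorem stmt_13_general {k B : Type*} [Field k] [CharZero k] [CommRing B] [IsDomain B] [Algebra k B]
    (h : MLstar k (B := B) ≠ ⊤) :
    ML k (B := B) = MLstar k (B := B) := by
  refine le_antisymm ML_le_MLstar fun b hb => mem_ML_iff.2 fun D hD => ?_
  by_contra hDb
  obtain ⟨T, hT, s, hs⟩ := exists_isLND_hasSlice_of_MLstar_ne_top h
  have hker : ∀ f, D f = 0 → T f = 0 := fun f hf =>
    hT.apply_eq_zero_of_apply_mul_eq_zero hDb
      (apply_mul_apply_eq_zero_of_mem_MLstar hb hD hT ⟨s, hs⟩ hf)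
  obtain ⟨r, hr, hrr⟩ := hD.exists_localSlice hDb
  have hTD := hD.smul_eq_smul_of_ker_le hr hrr hker
  have hTr : T r = 0 := by
    simpa [mem_MLstar_iff.1 hb T hT ⟨s, hs⟩, hDb] using congr($hTD b)
  simpa [hTr, hs, hr] using congr($hTD s)

/-- For a two-dimensional affine domain `B`, if `ML*(B) ≠ B` then `ML(B) = ML*(B)`. -/
theorem stmt_13 {k B : Type*} [Field k] [CharZero k] [CommRing B] [IsDomain B] [Algebra k B]
    [Algebra.FiniteType k B] (hdim : ringKrullDim B = 2)
    (h : MLstar k (B := B) ≠ ⊤) :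
    ML k (B := B) = MLstar k (B := B) :=
  stmt_13_general h
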